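/- The weakening rule for anonymity atoms is sound: if M ⊨_X 𝗑𝗒 Υ 𝗓𝗒 then M ⊨_X 𝗑𝗒 Υ 𝗓. -/

import Mathlib

namespace TeamSem

variable {M : Type}

/-- A team is a set of assignments (variables are natural numbers). -/
abbrev Team (M : Type) := Set (ℕ → M)

/-- Lax existential extension of a team `X` along variable `x` by a choice function `F`. -/
def extT (X : Team M) (x : ℕ) (F : (ℕ → M) → Set M) : Team M :=
  {t | ∃ s ∈ X, ∃ a ∈ F s, t = Function.update s x a}

/-- Universal extension of a team `X` along variable `x`. -/
def extAll (X : Team M) (x : ℕ) : Team M :=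
  {t | ∃ s ∈ X, ∃ a : M, t = Function.update s x a}

/-- Team semantics of the anonymity atom `a Υ b`. -/
def anonSat (X : Team M) (a b : List ℕ) : Prop :=
  ∀ s ∈ X, ∃ s' ∈ X, a.map s = a.map s' ∧ b.map s ≠ b.map s'

theorem _root_.List.map_eq_map_of_map_append_eq {α β : Type*} {f g : α → β} {l₁ l₂ : List α}
    (h : (l₁ ++ l₂).map f = (l₁ ++ l₂).map g) : l₂.map f = l₂.map g := by
  rw [List.map_append, List.map_append] at h
  exact List.append_inj_right' h (by simp only [List.length_map])

theorem anonSat_of_anonSat_append {X : Team M} {a b c : List ℕ}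
    (hc : ∀ s s' : ℕ → M, a.map s = a.map s' → c.map s = c.map s')
    (h : anonSat X a (b ++ c)) : anonSat X a b := by
  intro s hs
  obtain ⟨s', hs', hagree, hdiff⟩ := h s hs
  refine ⟨s', hs', hagree, fun hb => hdiff ?_⟩
  rw [List.map_append, List.map_append, hb, hc s s' hagree]

theorem anonymity_weakening (X : Team M) (x y z : List ℕ)
    (h : anonSat X (x ++ y) (z ++ y)) :
    anonSat X (x ++ y) z :=
  anonSat_of_anonSat_append (fun _ _ => List.map_eq_map_of_map_append_eq) h

end TeamSem
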